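/- arXiv:1510.05211 — 2 statements merged into one kernel-verified Lean document; each statement's English description precedes it below -/
import Mathlib

section
/- Let q be a polynomial of degree k ≤ n without multiple (repeated) irreducible factors, defining a curve in ℝ². Then any subset of the zero set of q containing more than d(n,k) = k(2n+3−k)/2 points is n-dependent. -/
/-!
If `X` is `n`-independent, the fundamental polynomials show that evaluation at the nodes maps
`Π_n` onto `ℝ^X`. Every multiple `q * p` with `p ∈ Π_{n-k}` lies in `Π_n` and vanishes on `X`,
and multiplication by `q ≠ 0` is injective, so the kernel has dimension at least
`dim Π_{n-k}`. Hence `#X ≤ dim Π_n - dim Π_{n-k} = d(n,k)`.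
-/

open MvPolynomial

/-- `p` is an `n`-fundamental polynomial of the node `A` with respect to the node set `X`. -/
def IsFund (n : ℕ) (X : Finset (Fin 2 → ℝ)) (A : Fin 2 → ℝ)
    (p : MvPolynomial (Fin 2) ℝ) : Prop :=
  p.totalDegree ≤ n ∧ eval A p = 1 ∧ ∀ B ∈ X, B ≠ A → eval B p = 0

/-- The node set `X` is `n`-independent: every node has an `n`-fundamental polynomial. -/
def NInd (n : ℕ) (X : Finset (Fin 2 → ℝ)) : Prop :=
  ∀ A ∈ X, ∃ p, IsFund n X A p

open Module Finset

theorem Nat.sum_range_succ_multichoose (s m : ℕ) :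
    ∑ j ∈ range (m + 1), s.multichoose j = (s + 1).multichoose m := by
  induction m with
  | zero => simp [Nat.multichoose_zero_right]
  | succ m ih => rw [sum_range_succ, ih, Nat.multichoose_succ_succ, add_comm]

namespace MvPolynomial

section Dimension

variable (σ R : Type*) [Fintype σ] [CommRing R] [Nontrivial R]

lemma setOf_sum_le_eq_biUnion_finsuppAntidiag [DecidableEq σ] (m : ℕ) :
    {d : σ →₀ ℕ | (d.sum fun _ e => e) ≤ m} =
      ↑((range (m + 1)).biUnion fun j => (univ : Finset σ).finsuppAntidiag j) := by
  ext d
  simp [Finsupp.sum_fintype]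

theorem finrank_restrictTotalDegree (m : ℕ) :
    finrank R (restrictTotalDegree σ R m) = (Fintype.card σ + m).choose m := by
  classical
  rw [restrictTotalDegree, finrank_eq_nat_card_basis (basisRestrictSupport R _),
    setOf_sum_le_eq_biUnion_finsuppAntidiag, Nat.card_coe_set_eq, Set.ncard_coe_finset,
    card_biUnion]
  · simp only [card_finsuppAntidiag_nat_eq_multichoose, card_univ]
    rw [Nat.sum_range_succ_multichoose, Nat.multichoose_eq, Nat.add_right_comm,
      Nat.add_sub_cancel]
  · intro i _ j _ hij
    exact disjoint_left.mpr fun d hi hj =>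
      hij ((mem_finsuppAntidiag.mp hi).1.symm.trans (mem_finsuppAntidiag.mp hj).1)

theorem two_mul_finrank_restrictTotalDegree_fin_two (m : ℕ) :
    2 * finrank R (restrictTotalDegree (Fin 2) R m) = (m + 1) * (m + 2) := by
  have h := Nat.add_one_mul_choose_eq (m + 1) 1
  rw [Nat.choose_one_right] at h
  rw [finrank_restrictTotalDegree, Fintype.card_fin, ← Nat.choose_symm_add, add_comm 2 m]
  linarith

end Dimension

theorem map_mulLeft_restrictTotalDegree_le {σ R : Type*} [CommSemiring R]
    {q : MvPolynomial σ R} {m n : ℕ} (hdeg : q.totalDegree + m ≤ n) :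
    (restrictTotalDegree σ R m).map (LinearMap.mulLeft R q) ≤ restrictTotalDegree σ R n := by
  rintro _ ⟨p, hp, rfl⟩
  rw [SetLike.mem_coe, mem_restrictTotalDegree] at *
  exact (totalDegree_mul q p).trans (le_trans (Nat.add_le_add_left hp _) hdeg)

section Interpolation

variable {σ K : Type*} [Field K]

noncomputable def evalOn (n : ℕ) (X : Finset (σ → K)) :
    restrictTotalDegree σ K n →ₗ[K] X → K :=
  LinearMap.pi (fun A : X => (aeval (A : σ → K)).toLinearMap) ∘ₗ
    (restrictTotalDegree σ K n).subtype

@[simp]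
theorem evalOn_apply {n : ℕ} {X : Finset (σ → K)} (p : restrictTotalDegree σ K n) (A : X) :
    evalOn n X p A = eval (A : σ → K) p := by
  simp [evalOn]

theorem map_mulLeft_le_ker_evalOn {n m : ℕ} {X : Finset (σ → K)} {q : MvPolynomial σ K}
    (hXq : ∀ A ∈ X, eval A q = 0) :
    ((restrictTotalDegree σ K m).map (LinearMap.mulLeft K q)).comap
      (restrictTotalDegree σ K n).subtype ≤ LinearMap.ker (evalOn n X) := by
  rintro p ⟨r, -, hr⟩
  rw [LinearMap.mulLeft_apply, Submodule.subtype_apply] at hr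
  ext A
  simp [← hr, hXq A A.2]

theorem card_add_finrank_le_of_surjective_evalOn [Finite σ] {n m : ℕ} {X : Finset (σ → K)}
    (hX : Function.Surjective (evalOn n X)) {q : MvPolynomial σ K} (hq : q ≠ 0)
    (hdeg : q.totalDegree + m ≤ n) (hXq : ∀ A ∈ X, eval A q = 0) :
    #X + finrank K (restrictTotalDegree σ K m) ≤ finrank K (restrictTotalDegree σ K n) := by
  set W := (restrictTotalDegree σ K m).map (LinearMap.mulLeft K q)
  have hW : W ≤ restrictTotalDegree σ K n := map_mulLeft_restrictTotalDegree_le hdeg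
  have hfinrank_W : finrank K W = finrank K (restrictTotalDegree σ K m) :=
    (LinearEquiv.finrank_eq (Submodule.equivMapOfInjective _ (mul_right_injective₀ hq) _)).symm
  calc #X + finrank K (restrictTotalDegree σ K m)
      = finrank K (LinearMap.range (evalOn n X)) +
          finrank K (W.comap (restrictTotalDegree σ K n).subtype) := by
        rw [LinearMap.range_eq_top.mpr hX, finrank_top, finrank_fintype_fun_eq_card,
          Fintype.card_coe, LinearEquiv.finrank_eq (Submodule.comapSubtypeEquivOfLe hW),
          hfinrank_W]
    _ ≤ finrank K (LinearMap.range (evalOn n X)) + finrank K (LinearMap.ker (evalOn n X)) :=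
        Nat.add_le_add_left (Submodule.finrank_mono (map_mulLeft_le_ker_evalOn hXq)) _
    _ = finrank K (restrictTotalDegree σ K n) := LinearMap.finrank_range_add_finrank_ker _

end Interpolation

end MvPolynomial

theorem NInd.surjective_evalOn {n : ℕ} {X : Finset (Fin 2 → ℝ)} (hX : NInd n X) :
    Function.Surjective (evalOn n X) := by
  choose p hp using fun A : X => hX A A.2
  intro f
  refine ⟨∑ A, f A • ⟨p A, (mem_restrictTotalDegree _ _ _).mpr (hp A).1⟩, ?_⟩
  ext B
  rw [map_sum, Finset.sum_apply, Finset.sum_eq_single B]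
  · simp [(hp B).2.1]
  · intro A _ hAB
    simp [(hp A).2.2 B B.2 fun h => hAB (Subtype.ext h).symm]
  · simp

/-- Any subset of a squarefree curve of degree k ≤ n with more than d(n,k) points is
n-dependent, where d(n,k) = k(2n+3−k)/2. -/
theorem stmt_10 (n k : ℕ) (hk : k ≤ n) (q : MvPolynomial (Fin 2) ℝ)
    (hq : q.totalDegree = k) (hsf : Squarefree q)
    (X : Finset (Fin 2 → ℝ)) (hXq : ∀ A ∈ X, eval A q = 0)
    (hcard : k * (2 * n + 3 - k) / 2 < X.card) :
    ¬ NInd n X := by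
  intro hX
  obtain ⟨m, rfl⟩ := Nat.exists_eq_add_of_le hk
  have hq0 : q ≠ 0 := by rintro rfl; exact not_squarefree_zero hsf
  have hcount := card_add_finrank_le_of_surjective_evalOn hX.surjective_evalOn hq0
    (m := m) (by omega) hXq
  have hdim_n := two_mul_finrank_restrictTotalDegree_fin_two ℝ (k + m)
  have hdim_m := two_mul_finrank_restrictTotalDegree_fin_two ℝ m
  have h2card : 2 * #X ≤ k * (2 * (k + m) + 3 - k) := by
    rw [show 2 * (k + m) + 3 - k = k + 2 * m + 3 by omega]
    nlinarith
  omega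
end

section
/- Let q be a polynomial of degree k ≤ n without repeated irreducible factors and X a set of exactly d(n,k) = k(2n+3−k)/2 points on the curve q = 0. Then X is n-independent if and only if every p ∈ Π_n vanishing on X is of the form p = q·r with r ∈ Π_{n−k}. -/
open MvPolynomial

/-!
Evaluation at the nodes is a linear map `L : Π_n → ℝ^X`, and since `q` vanishes on `X`,
multiplication by `q` embeds `Π_{n-k}` into `ker L`. Now `X` is `n`-independent iff `L` is onto,
and the divisibility condition says `ker L = q · Π_{n-k}`. As
`dim Π_n = N_n = d(n, k) + N_{n-k} = #X + dim Π_{n-k}`, rank–nullity makes the two equivalent.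
-/

theorem LinearMap.surjective_iff_ker_le_range {K U V W : Type*} [DivisionRing K]
    [AddCommGroup U] [Module K U] [AddCommGroup V] [Module K V] [AddCommGroup W] [Module K W]
    [FiniteDimensional K V] [FiniteDimensional K W] {M : U →ₗ[K] V} {L : V →ₗ[K] W}
    (hM : Function.Injective M) (hML : range M ≤ ker L)
    (hdim : Module.finrank K V = Module.finrank K U + Module.finrank K W) :
    Function.Surjective L ↔ ker L ≤ range M := by
  have hU : FiniteDimensional K U := .of_injective M hM
  have hrank := L.finrank_range_add_finrank_ker
  have hrangeM := finrank_range_of_inj hM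
  rw [← range_eq_top]
  constructor
  · intro hL
    rw [hL, finrank_top] at hrank
    exact (Submodule.eq_of_le_of_finrank_le hML (by omega)).ge
  · intro hle
    have hker := Submodule.finrank_mono hle
    have hrangeL := Submodule.finrank_le (range L)
    exact Submodule.eq_top_of_finrank_eq (by omega)

theorem LinearMap.surjective_iff_single_mem_range {R V ι : Type*} [Semiring R] [AddCommMonoid V]
    [Module R V] [Finite ι] [DecidableEq ι] (L : V →ₗ[R] (ι → R)) :
    Function.Surjective L ↔ ∀ i, Pi.single i 1 ∈ range L := by
  refine ⟨fun hL i => hL _, fun h => ?_⟩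
  rw [← range_eq_top, eq_top_iff, ← (Pi.basisFun R ι).span_eq, Submodule.span_le]
  rintro _ ⟨i, rfl⟩
  simpa using h i

/-- `N_n = d(n, k) + N_{n-k}`, with `N_m = (m + 1)(m + 2)/2`. -/
theorem Nat.triangle_eq_add (n k : ℕ) (hk : k ≤ n) :
    (n + 1) * (n + 2) / 2 = k * (2 * n + 3 - k) / 2 + (n - k + 1) * (n - k + 2) / 2 := by
  obtain ⟨j, rfl⟩ := Nat.exists_eq_add_of_le hk
  have hk_even : 2 ∣ k * (k + 2 * j + 3) := by
    rw [show k * (k + 2 * j + 3) = k * (k + 1) + 2 * (k * (j + 1)) by ring]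
    exact dvd_add (Nat.even_mul_succ_self k).two_dvd (dvd_mul_right 2 _)
  rw [show 2 * (k + j) + 3 - k = k + 2 * j + 3 by omega, Nat.add_sub_cancel_left,
    ← Nat.add_div_of_dvd_right hk_even]
  congr 1
  ring

theorem Finset.Nat.card_biUnion_range_antidiagonal (m : ℕ) :
    ((Finset.range (m + 1)).biUnion fun j => Finset.HasAntidiagonal.antidiagonal j).card =
      (m + 1) * (m + 2) / 2 := by
  rw [Finset.card_biUnion]
  · simp only [Finset.Nat.card_antidiagonal]
    calc ∑ i ∈ Finset.range (m + 1), (i + 1) = ∑ i ∈ Finset.range (m + 2), i :=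
          (Finset.sum_range_succ' (fun i => i) (m + 1)).symm
      _ = (m + 1) * (m + 2) / 2 := by rw [Finset.sum_range_id, mul_comm]; rfl
  · intro i _ j _ hij
    exact Finset.disjoint_left.2 fun p hi hj =>
      hij ((Finset.HasAntidiagonal.mem_antidiagonal.1 hi).symm.trans
        (Finset.HasAntidiagonal.mem_antidiagonal.1 hj))

namespace MvPolynomial

section

variable {σ R : Type*} [CommRing R]

noncomputable def evalOnNodes (n : ℕ) (X : Finset (σ → R)) :
    restrictTotalDegree σ R n →ₗ[R] (X → R) :=
  LinearMap.pi fun A => (aeval A.1).toLinearMap ∘ₗ (restrictTotalDegree σ R n).subtype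

@[simp]
theorem evalOnNodes_apply {n : ℕ} {X : Finset (σ → R)} (p : restrictTotalDegree σ R n) (A : X) :
    evalOnNodes n X p A = eval A.1 p.1 :=
  rfl

theorem mem_ker_evalOnNodes {n : ℕ} {X : Finset (σ → R)} {p : restrictTotalDegree σ R n} :
    p ∈ LinearMap.ker (evalOnNodes n X) ↔ ∀ A ∈ X, eval A p.1 = 0 := by
  rw [LinearMap.mem_ker, _root_.funext_iff, Subtype.forall]
  rfl

theorem evalOnNodes_eq_single_iff [DecidableEq (σ → R)] {n : ℕ} {X : Finset (σ → R)} {A : σ → R}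
    (hA : A ∈ X) (p : restrictTotalDegree σ R n) :
    evalOnNodes n X p = Pi.single ⟨A, hA⟩ 1 ↔
      eval A p.1 = 1 ∧ ∀ B ∈ X, B ≠ A → eval B p.1 = 0 := by
  rw [_root_.funext_iff, Subtype.forall]
  constructor
  · intro h
    exact ⟨by simpa using h A hA, fun B hB hBA => by simpa [hBA] using h B hB⟩
  · rintro ⟨h1, h0⟩ B hB
    by_cases hBA : B = A
    · subst hBA
      simpa using h1
    · simpa [hBA] using h0 B hB hBA

noncomputable def mulLeftRestrict (q : MvPolynomial σ R) {m n : ℕ} (h : q.totalDegree + m ≤ n) :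
    restrictTotalDegree σ R m →ₗ[R] restrictTotalDegree σ R n :=
  (LinearMap.mulLeft R q).restrict fun r hr => by
    rw [mem_restrictTotalDegree] at hr ⊢
    exact (totalDegree_mul q r).trans (by omega)

theorem mem_range_mulLeftRestrict {q : MvPolynomial σ R} {m n : ℕ} {h : q.totalDegree + m ≤ n}
    {p : restrictTotalDegree σ R n} :
    p ∈ LinearMap.range (mulLeftRestrict q h) ↔
      ∃ r : MvPolynomial σ R, r.totalDegree ≤ m ∧ p.1 = q * r := by
  constructor
  · rintro ⟨r, rfl⟩
    exact ⟨r.1, (mem_restrictTotalDegree _ _ _).1 r.2, rfl⟩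
  · rintro ⟨r, hr, hp⟩
    exact ⟨⟨r, (mem_restrictTotalDegree _ _ _).2 hr⟩, Subtype.ext hp.symm⟩

theorem mulLeftRestrict_injective [IsDomain R] {q : MvPolynomial σ R} (hq : q ≠ 0) {m n : ℕ}
    (h : q.totalDegree + m ≤ n) : Function.Injective (mulLeftRestrict q h) :=
  fun _ _ hrs => Subtype.ext (mul_left_cancel₀ hq (congrArg Subtype.val hrs))

theorem range_mulLeftRestrict_le_ker_evalOnNodes {q : MvPolynomial σ R} {m n : ℕ}
    (h : q.totalDegree + m ≤ n) {X : Finset (σ → R)} (hXq : ∀ A ∈ X, eval A q = 0) :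
    LinearMap.range (mulLeftRestrict q h) ≤ LinearMap.ker (evalOnNodes n X) := by
  rintro _ ⟨r, rfl⟩
  rw [mem_ker_evalOnNodes]
  intro A hA
  exact (eval_mul ..).trans (by rw [hXq A hA, zero_mul])

theorem forall_vanishing_eq_mul_iff {q : MvPolynomial σ R} {m n : ℕ} (h : q.totalDegree + m ≤ n)
    (X : Finset (σ → R)) :
    (∀ p : MvPolynomial σ R, p.totalDegree ≤ n → (∀ A ∈ X, eval A p = 0) →
        ∃ r : MvPolynomial σ R, r.totalDegree ≤ m ∧ p = q * r) ↔
      LinearMap.ker (evalOnNodes n X) ≤ LinearMap.range (mulLeftRestrict q h) := by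
  simp only [SetLike.le_def, mem_ker_evalOnNodes, mem_range_mulLeftRestrict, Subtype.forall,
    mem_restrictTotalDegree]

end

theorem finrank_restrictTotalDegree_fin_two (R : Type*) [CommRing R] [Nontrivial R] (m : ℕ) :
    Module.finrank R (restrictTotalDegree (Fin 2) R m) = (m + 1) * (m + 2) / 2 := by
  let e : {d : Fin 2 →₀ ℕ | (d.sum fun _ e => e) ≤ m} ≃
      {p // p ∈ (Finset.range (m + 1)).biUnion fun j => Finset.HasAntidiagonal.antidiagonal j} :=
    (Finsupp.equivFunOnFinite.trans (piFinTwoEquiv fun _ => ℕ)).subtypeEquiv fun d => by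
      simp [Finsupp.sum_fintype]
  have : Fintype {d : Fin 2 →₀ ℕ | (d.sum fun _ e => e) ≤ m} := .ofEquiv _ e.symm
  rw [restrictTotalDegree, Module.finrank_eq_card_basis (basisRestrictSupport R _),
    Fintype.card_congr e, Fintype.card_coe,
    Finset.Nat.card_biUnion_range_antidiagonal]

end MvPolynomial

theorem nInd_iff_surjective_evalOnNodes (n : ℕ) (X : Finset (Fin 2 → ℝ)) :
    NInd n X ↔ Function.Surjective (evalOnNodes n X) := by
  classical
  rw [LinearMap.surjective_iff_single_mem_range, Subtype.forall]
  refine forall₂_congr fun A hA => ⟨fun ⟨p, hdeg, h1, h0⟩ => ?_, fun ⟨p, hp⟩ => ?_⟩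
  · exact ⟨⟨p, (mem_restrictTotalDegree _ _ _).2 hdeg⟩,
      (evalOnNodes_eq_single_iff hA _).2 ⟨h1, h0⟩⟩
  · exact ⟨p.1, (mem_restrictTotalDegree _ _ _).1 p.2, (evalOnNodes_eq_single_iff hA p).1 hp⟩

/-- A set of exactly d(n,k) points on a squarefree curve q of degree k ≤ n is
n-independent iff every polynomial of degree ≤ n vanishing on it is divisible by q. -/
theorem stmt_11 (n k : ℕ) (hk : k ≤ n) (q : MvPolynomial (Fin 2) ℝ)
    (hq : q.totalDegree = k) (hsf : Squarefree q)
    (X : Finset (Fin 2 → ℝ)) (hXq : ∀ A ∈ X, eval A q = 0)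
    (hcard : X.card = k * (2 * n + 3 - k) / 2) :
    NInd n X ↔ ∀ p : MvPolynomial (Fin 2) ℝ, p.totalDegree ≤ n → (∀ A ∈ X, eval A p = 0) →
      ∃ r : MvPolynomial (Fin 2) ℝ, r.totalDegree ≤ n - k ∧ p = q * r := by
  have hdeg : q.totalDegree + (n - k) ≤ n := by omega
  rw [nInd_iff_surjective_evalOnNodes, forall_vanishing_eq_mul_iff hdeg]
  refine LinearMap.surjective_iff_ker_le_range (mulLeftRestrict_injective hsf.ne_zero hdeg)
    (range_mulLeftRestrict_le_ker_evalOnNodes hdeg hXq) ?_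
  rw [finrank_restrictTotalDegree_fin_two, finrank_restrictTotalDegree_fin_two,
    Module.finrank_fintype_fun_eq_card, Fintype.card_coe, hcard, Nat.triangle_eq_add n k hk,
    add_comm]
end
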